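/- Let K be a field of characteristic p > 3 and f = x^4 + y^4 + a x^2 y^2 ∈ K[[x,y]] with a^2 ≠ 4. Then μ(f) = 9. -/

import Mathlib

/-!
The partial derivatives of `f` are `g₁ = 4x³ + 2axy²` and `g₂ = 4y³ + 2ax²y`. The combinations
`2y g₁ - ax g₂ = (8 - 2a²) x³y` and `2x g₂ - ay g₁ = (8 - 2a²) xy³` put `x³y` and `xy³` into the
Jacobian ideal `J` once `a² ≠ 4`, and then `4x⁵ = x² g₁ - 2ay · x³y` and `y⁵` follow. Every power
series all of whose monomials are divisible by one of `x⁵, x³y, xy³, y⁵` therefore lies in `J`.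
Modulo `J` we have `x³ ≡ -(a/2) xy²`, `y³ ≡ -(a/2) x²y` and `x⁴ ≡ y⁴ ≡ -(a/2) x²y²`, so `J` is
exactly the common kernel of nine linear functionals on the coefficients of degree `≤ 4`, which are
jointly surjective onto `K⁹`: the monomials `1, x, y, x², xy, y², x²y, xy², x²y²` form a basis of
`K[[x,y]]/J`.
-/

open MvPowerSeries

noncomputable def pd {n : ℕ} {K : Type} [Field K] (i : Fin n)
    (f : MvPowerSeries (Fin n) K) : MvPowerSeries (Fin n) K :=
  fun m => ((m i + 1 : ℕ) : K) * MvPowerSeries.coeff (R := K) (m + Finsupp.single i 1) f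

/-- The Milnor number: dimension of the quotient by the Jacobian ideal. -/
noncomputable def milnor {n : ℕ} (K : Type) [Field K] (f : MvPowerSeries (Fin n) K) : ℕ :=
  Module.finrank K (MvPowerSeries (Fin n) K ⧸ Ideal.span (Set.range fun i => pd i f))

theorem pd_eq_pderiv {n : ℕ} {K : Type} [Field K] (i : Fin n) (f : MvPowerSeries (Fin n) K) :
    pd i f = pderiv K i f := by
  ext m
  rw [coeff_pderiv, mul_comm]
  simp [pd, coeff_apply]

theorem Ideal.finrank_quotient_eq_of_restrictScalars_eq_ker {K A V : Type*} [Field K] [CommRing A]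
    [Algebra K A] [AddCommGroup V] [Module K V] (I : Ideal A) (L : A →ₗ[K] V)
    (hL : Function.Surjective L) (hI : I.restrictScalars K = LinearMap.ker L) :
    Module.finrank K (A ⧸ I) = Module.finrank K V :=
  (((Submodule.Quotient.restrictScalarsEquiv K I).symm.trans
    (Submodule.quotEquivOfEq _ _ hI)).trans (L.quotKerEquivOfSurjective hL)).finrank_eq

namespace MvPowerSeries

theorem mem_of_C_mul_mem {σ K : Type*} [Field K] {I : Ideal (MvPowerSeries σ K)}
    {d : K} (hd : d ≠ 0) {f : MvPowerSeries σ K} (h : C d * f ∈ I) : f ∈ I :=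
  (Ideal.unit_mul_mem_iff_mem I ((isUnit_iff_ne_zero.mpr hd).map C)).mp h

theorem mem_span_monomial_of_coeff_eq_zero {σ R : Type*} [CommSemiring R]
    (N : Finset (σ →₀ ℕ)) {f : MvPowerSeries σ R}
    (hf : ∀ m, (∀ n ∈ N, ¬ n ≤ m) → coeff m f = 0) :
    f ∈ Ideal.span ((monomial · (1 : R)) '' N) := by
  classical
  induction N using Finset.induction_on generalizing f with
  | empty =>
    rw [show f = 0 from ext fun m => by simpa using hf m]
    exact zero_mem _
  | insert n N _ ih =>
    let quot : MvPowerSeries σ R := fun m => coeff (m + n) f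
    let rest : MvPowerSeries σ R := fun m => if n ≤ m then 0 else coeff m f
    have hquot : ∀ m, coeff m quot = coeff (m + n) f := fun _ => rfl
    have hrest : ∀ m, coeff m rest = if n ≤ m then 0 else coeff m f := fun _ => rfl
    have hsplit : f = monomial n 1 * quot + rest := by
      ext m
      rw [map_add, coeff_monomial_mul, hrest]
      split_ifs with h
      · rw [hquot, tsub_add_cancel_of_le h, one_mul, add_zero]
      · rw [zero_add]
    rw [hsplit, Finset.coe_insert, Set.image_insert_eq, Ideal.span_insert]
    refine Submodule.add_mem_sup (Ideal.mul_mem_right _ _ (Ideal.mem_span_singleton_self _))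
      (ih fun m hm => ?_)
    rw [hrest]
    by_cases h : n ≤ m
    · rw [if_pos h]
    · simpa [h] using hf m (by simpa [h] using hm)

end MvPowerSeries

namespace X9

noncomputable def biexp (i j : ℕ) : Fin 2 →₀ ℕ := Finsupp.single 0 i + Finsupp.single 1 j

@[simp] lemma biexp_apply_zero (i j : ℕ) : biexp i j 0 = i := by simp [biexp]

@[simp] lemma biexp_apply_one (i j : ℕ) : biexp i j 1 = j := by simp [biexp]

lemma eq_biexp (m : Fin 2 →₀ ℕ) : m = biexp (m 0) (m 1) := by
  ext s
  fin_cases s <;> simp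

@[simp] lemma biexp_inj {i j k l : ℕ} : biexp i j = biexp k l ↔ i = k ∧ j = l := by
  simp [Finsupp.ext_iff, Fin.forall_fin_two]

@[simp] lemma biexp_le_biexp {i j k l : ℕ} : biexp i j ≤ biexp k l ↔ i ≤ k ∧ j ≤ l := by
  simp [Finsupp.le_def, Fin.forall_fin_two]

@[simp] lemma biexp_sub_biexp (i j k l : ℕ) : biexp i j - biexp k l = biexp (i - k) (j - l) := by
  ext s
  fin_cases s <;> simp

variable {K : Type} [Field K]

lemma monomial_biexp (i j : ℕ) (r : K) :
    monomial (biexp i j) r = C r * X 0 ^ i * X 1 ^ j := by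
  rw [biexp, X_pow_eq, X_pow_eq, ← monomial_zero_eq_C_apply, monomial_mul_monomial,
    monomial_mul_monomial, mul_one, mul_one, zero_add]

variable (a : K)

noncomputable def quartic : MvPowerSeries (Fin 2) K := X 0 ^ 4 + X 1 ^ 4 + C a * X 0 ^ 2 * X 1 ^ 2

noncomputable def dx : MvPowerSeries (Fin 2) K := 4 * X 0 ^ 3 + 2 * C a * X 0 * X 1 ^ 2

noncomputable def dy : MvPowerSeries (Fin 2) K := 4 * X 1 ^ 3 + 2 * C a * X 0 ^ 2 * X 1

lemma pderiv_zero_quartic : pderiv K 0 (quartic a) = dx a := by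
  simp only [quartic, dx, map_add, Derivation.leibniz, Derivation.leibniz_pow, pderiv_X_self,
    pderiv_X_of_ne one_ne_zero, pderiv_C, smul_eq_mul, nsmul_eq_mul]
  ring

lemma pderiv_one_quartic : pderiv K 1 (quartic a) = dy a := by
  simp only [quartic, dy, map_add, Derivation.leibniz, Derivation.leibniz_pow, pderiv_X_self,
    pderiv_X_of_ne zero_ne_one, pderiv_C, smul_eq_mul, nsmul_eq_mul]
  ring

lemma dx_eq : dx a = monomial (biexp 3 0) 4 + monomial (biexp 1 2) (2 * a) := by
  simp only [dx, monomial_biexp, map_mul, map_ofNat]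
  ring

lemma dy_eq : dy a = monomial (biexp 0 3) 4 + monomial (biexp 2 1) (2 * a) := by
  simp only [dy, monomial_biexp, map_mul, map_ofNat]
  ring

noncomputable def jacobian : Ideal (MvPowerSeries (Fin 2) K) := Ideal.span {dx a, dy a}

lemma span_range_pd_quartic :
    Ideal.span (Set.range fun i => pd i (quartic a)) = jacobian a := by
  rw [jacobian, ← pderiv_zero_quartic, ← pderiv_one_quartic]
  congr 1
  ext g
  simp [pd_eq_pderiv, Fin.exists_fin_two, eq_comm]

/-- The coordinates on the basis `1, x, y, x², xy, y², x²y, xy², x²y²` of the quotient by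
`jacobian a`, the last three scaled by `2`. -/
noncomputable def coords : MvPowerSeries (Fin 2) K →ₗ[K] (Fin 9 → K) :=
  LinearMap.pi ![coeff (biexp 0 0), coeff (biexp 1 0), coeff (biexp 0 1), coeff (biexp 2 0),
    coeff (biexp 1 1), coeff (biexp 0 2), 2 • coeff (biexp 2 1) - a • coeff (biexp 0 3),
    2 • coeff (biexp 1 2) - a • coeff (biexp 3 0),
    2 • coeff (biexp 2 2) - a • (coeff (biexp 4 0) + coeff (biexp 0 4))]

variable {a} in
lemma coords_eq_zero_iff {f : MvPowerSeries (Fin 2) K} :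
    coords a f = 0 ↔ coeff (biexp 0 0) f = 0 ∧ coeff (biexp 1 0) f = 0 ∧
      coeff (biexp 0 1) f = 0 ∧ coeff (biexp 2 0) f = 0 ∧ coeff (biexp 1 1) f = 0 ∧
      coeff (biexp 0 2) f = 0 ∧ 2 * coeff (biexp 2 1) f = a * coeff (biexp 0 3) f ∧
      2 * coeff (biexp 1 2) f = a * coeff (biexp 3 0) f ∧
      2 * coeff (biexp 2 2) f = a * (coeff (biexp 4 0) f + coeff (biexp 0 4) f) := by
  simp [funext_iff, Fin.forall_fin_succ, coords, sub_eq_zero, mul_add]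

lemma coords_mul_dx (p : MvPowerSeries (Fin 2) K) : coords a (p * dx a) = 0 := by
  ext k
  fin_cases k <;> simp [coords, dx_eq, mul_add, coeff_mul_monomial] <;> ring

lemma coords_mul_dy (p : MvPowerSeries (Fin 2) K) : coords a (p * dy a) = 0 := by
  ext k
  fin_cases k <;> simp [coords, dy_eq, mul_add, coeff_mul_monomial] <;> ring

lemma jacobian_le_ker_coords : (jacobian a).restrictScalars K ≤ LinearMap.ker (coords a) := by
  intro f hf
  obtain ⟨p, q, rfl⟩ := Ideal.mem_span_pair.mp hf
  rw [LinearMap.mem_ker, map_add, coords_mul_dx, coords_mul_dy, add_zero]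

lemma coords_surjective (h2 : (2 : K) ≠ 0) : Function.Surjective (coords a) := by
  intro v
  refine ⟨monomial (biexp 0 0) (v 0) + monomial (biexp 1 0) (v 1) + monomial (biexp 0 1) (v 2) +
    monomial (biexp 2 0) (v 3) + monomial (biexp 1 1) (v 4) + monomial (biexp 0 2) (v 5) +
    monomial (biexp 2 1) (v 6 / 2) + monomial (biexp 1 2) (v 7 / 2) +
    monomial (biexp 2 2) (v 8 / 2), ?_⟩
  ext k
  fin_cases k <;> simp [coords, coeff_monomial] <;> field_simp

/-- The six coefficients of degree `≤ 2` are left out because `coords` forces them to vanish,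
`x³y` and `xy³` because they lie in `jacobian a`. -/
noncomputable def lowPart (f : MvPowerSeries (Fin 2) K) : MvPowerSeries (Fin 2) K :=
  monomial (biexp 3 0) (coeff (biexp 3 0) f) + monomial (biexp 2 1) (coeff (biexp 2 1) f) +
  monomial (biexp 1 2) (coeff (biexp 1 2) f) + monomial (biexp 0 3) (coeff (biexp 0 3) f) +
  monomial (biexp 4 0) (coeff (biexp 4 0) f) + monomial (biexp 2 2) (coeff (biexp 2 2) f) +
  monomial (biexp 0 4) (coeff (biexp 0 4) f)

variable {a}

lemma coeff_sub_lowPart_eq_zero {f : MvPowerSeries (Fin 2) K} (hf : coords a f = 0)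
    (m : Fin 2 →₀ ℕ)
    (hm : ∀ n ∈ ({biexp 5 0, biexp 3 1, biexp 1 3, biexp 0 5} : Finset _), ¬ n ≤ m) :
    coeff m (f - lowPart f) = 0 := by
  obtain ⟨h00, h10, h01, h20, h11, h02, -⟩ := coords_eq_zero_iff.mp hf
  rw [eq_biexp m] at hm ⊢
  simp only [Finset.mem_insert, Finset.mem_singleton, forall_eq_or_imp, forall_eq,
    biexp_le_biexp] at hm
  have hi : m 0 ≤ 4 := by omega
  have hj : m 1 ≤ 4 := by omega
  interval_cases h0 : m 0 <;> interval_cases h1 : m 1 <;> simp_all [lowPart, coeff_monomial]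

variable (h2 : (2 : K) ≠ 0)
include h2

lemma lowPart_mem {f : MvPowerSeries (Fin 2) K} (hf : coords a f = 0) :
    lowPart f ∈ jacobian a := by
  obtain ⟨-, -, -, -, -, -, h21, h12, h22⟩ := coords_eq_zero_iff.mp hf
  replace h21 := congrArg (C (σ := Fin 2)) h21
  replace h12 := congrArg (C (σ := Fin 2)) h12
  replace h22 := congrArg (C (σ := Fin 2)) h22
  simp only [map_mul, map_add, map_ofNat] at h21 h12 h22
  refine mem_of_C_mul_mem (mul_ne_zero h2 h2) ?_
  rw [jacobian, Ideal.mem_span_pair]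
  refine ⟨C (coeff (biexp 3 0) f) + C (coeff (biexp 4 0) f) * X 0,
    C (coeff (biexp 0 3) f) + C (coeff (biexp 0 4) f) * X 1, ?_⟩
  simp only [lowPart, dx, dy, monomial_biexp, map_mul, map_ofNat]
  linear_combination (-2 * X 0 ^ 2 * X 1) * h21 - (2 * X 0 * X 1 ^ 2) * h12 -
    (2 * X 0 ^ 2 * X 1 ^ 2) * h22

variable (ha : a ^ 2 ≠ 4)
include ha

lemma x_cube_mul_y_mem : X 0 ^ 3 * X 1 ∈ jacobian a := by
  refine mem_of_C_mul_mem (mul_ne_zero h2 (sub_ne_zero.mpr (Ne.symm ha))) ?_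
  rw [jacobian, Ideal.mem_span_pair]
  exact ⟨2 * X 1, -(C a * X 0), by simp only [dx, dy, map_sub, map_mul, map_ofNat, map_pow]; ring⟩

lemma x_mul_y_cube_mem : X 0 * X 1 ^ 3 ∈ jacobian a := by
  refine mem_of_C_mul_mem (mul_ne_zero h2 (sub_ne_zero.mpr (Ne.symm ha))) ?_
  rw [jacobian, Ideal.mem_span_pair]
  exact ⟨-(C a * X 1), 2 * X 0, by simp only [dx, dy, map_sub, map_mul, map_ofNat, map_pow]; ring⟩

lemma x_pow_five_mem : X 0 ^ 5 ∈ jacobian a := by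
  refine mem_of_C_mul_mem (mul_ne_zero h2 h2) ?_
  have h : C (2 * 2) * X 0 ^ 5 = X 0 ^ 2 * dx a - 2 * C a * X 1 * (X 0 ^ 3 * X 1) := by
    simp only [dx, map_mul, map_ofNat]
    ring
  rw [h]
  exact sub_mem (Ideal.mul_mem_left _ _ (Ideal.subset_span (by simp)))
    (Ideal.mul_mem_left _ _ (x_cube_mul_y_mem h2 ha))

lemma y_pow_five_mem : X 1 ^ 5 ∈ jacobian a := by
  refine mem_of_C_mul_mem (mul_ne_zero h2 h2) ?_
  have h : C (2 * 2) * X 1 ^ 5 = X 1 ^ 2 * dy a - 2 * C a * X 0 * (X 0 * X 1 ^ 3) := by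
    simp only [dy, map_mul, map_ofNat]
    ring
  rw [h]
  exact sub_mem (Ideal.mul_mem_left _ _ (Ideal.subset_span (by simp)))
    (Ideal.mul_mem_left _ _ (x_mul_y_cube_mem h2 ha))

lemma span_monomial_le_jacobian :
    Ideal.span ((monomial · (1 : K)) ''
      ↑({biexp 5 0, biexp 3 1, biexp 1 3, biexp 0 5} : Finset (Fin 2 →₀ ℕ))) ≤ jacobian a := by
  simp only [Ideal.span_le, Finset.coe_insert, Finset.coe_singleton, Set.image_insert_eq,
    Set.image_singleton, Set.insert_subset_iff, Set.singleton_subset_iff, monomial_biexp, map_one,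
    one_mul, pow_zero, mul_one, pow_one, SetLike.mem_coe]
  exact ⟨x_pow_five_mem h2 ha, x_cube_mul_y_mem h2 ha, x_mul_y_cube_mem h2 ha,
    y_pow_five_mem h2 ha⟩

lemma ker_coords : LinearMap.ker (coords a) = (jacobian a).restrictScalars K := by
  refine le_antisymm (fun f hf => ?_) (jacobian_le_ker_coords a)
  rw [← add_sub_cancel (lowPart f) f]
  exact add_mem (lowPart_mem h2 hf) (span_monomial_le_jacobian h2 ha
    (mem_span_monomial_of_coeff_eq_zero _ (coeff_sub_lowPart_eq_zero hf)))

end X9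

theorem stmt4 (K : Type) [Field K] (p : ℕ) [CharP K p] (hp : 3 < p) (a : K)
    (ha : a ^ 2 ≠ 4) :
    milnor K (X (0 : Fin 2) ^ 4 + X 1 ^ 4 + C (σ := Fin 2) (R := K) a * X 0 ^ 2 * X 1 ^ 2) = 9 := by
  have h2 : (2 : K) ≠ 0 := by
    have := (CharP.cast_eq_zero_iff K p 2).not.mpr fun h => by
      have := Nat.le_of_dvd two_pos h
      omega
    exact_mod_cast this
  rw [milnor, ← X9.quartic, X9.span_range_pd_quartic,
    Ideal.finrank_quotient_eq_of_restrictScalars_eq_ker _ _ (X9.coords_surjective a h2)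
      (X9.ker_coords h2 ha).symm,
    Module.finrank_fin_fun]
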